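/- arXiv:1705.01360 — 2 statements merged into one kernel-verified Lean document; each statement's English description precedes it below -/
import Mathlib

section
/- Let ∅ ≠ E ⊂ X be a closed set, let α < 0 and 1 < p < ∞ be such that codim_A(E) > α/(1−p), and set w = δ_E^{-α}. Then w belongs to the Muckenhoupt class A_p. -/
open MeasureTheory Metric Set
open scoped ENNReal NNReal

namespace ApDistance

noncomputable section

variable {X : Type*} [MetricSpace X] [MeasurableSpace X] [BorelSpace X]

/-- All balls of positive radius have positive and finite measure. -/
def BallsPosFinite (μ : Measure X) : Prop :=
  ∀ (x : X) (r : ℝ), 0 < r → 0 < μ (ball x r) ∧ μ (ball x r) < ∞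

/-- The measure `μ` is doubling with constant `C`. -/
def DoublingWith (μ : Measure X) (C : ℝ) : Prop :=
  ∀ (x : X) (r : ℝ), 0 < r → μ (ball x (2 * r)) ≤ ENNReal.ofReal C * μ (ball x r)

/-- The measure `μ` is doubling. -/
def Doubling (μ : Measure X) : Prop :=
  ∃ C : ℝ, 0 < C ∧ DoublingWith μ C

/-- The (quantitative) reverse doubling condition with exponent `η`. -/
def ReverseDoubling (μ : Measure X) (η : ℝ) : Prop :=
  ∃ C : ℝ, 0 < C ∧ ∀ (x y : X) (r R : ℝ), 0 < r → 0 < R → ball y r ⊆ ball x R →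
    μ (ball y r) ≤ ENNReal.ofReal (C * (r / R) ^ η) * μ (ball x R)

/-- Standing assumptions (S1)-(S2): `X` is unbounded, points have measure zero,
and all annuli are nonempty. -/
def StandingAssumptions (μ : Measure X) : Prop :=
  ¬ Bornology.IsBounded (univ : Set X) ∧ (∀ x : X, μ {x} = 0) ∧
    ∀ (x : X) (r R : ℝ), 0 < r → r < R → (ball x R \ ball x r).Nonempty

/-- Ahlfors `Q`-regularity of the metric measure space. -/
def AhlforsRegular (μ : Measure X) (Q : ℝ) : Prop :=
  ∃ C : ℝ, 1 ≤ C ∧ ∀ (x : X) (r : ℝ), 0 < r → ENNReal.ofReal r < EMetric.diam (univ : Set X) →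
    ENNReal.ofReal (C⁻¹ * r ^ Q) ≤ μ (ball x r) ∧ μ (ball x r) ≤ ENNReal.ofReal (C * r ^ Q)

/-- The set of admissible exponents in the definition of the (upper) Assouad dimension:
`E ∩ B(x,R)` can be covered by at most `C (R/r)^s` balls of radius `r`. -/
def assouadDimBddSet (E : Set X) : Set ℝ :=
  {s : ℝ | 0 ≤ s ∧ ∃ C : ℝ, 1 ≤ C ∧ ∀ x ∈ E, ∀ r R : ℝ, 0 < r → r < R →
    ENNReal.ofReal R < 2 * EMetric.diam (univ : Set X) →
    ∃ F : Finset X, (F.card : ℝ) ≤ C * (R / r) ^ s ∧ E ∩ ball x R ⊆ ⋃ y ∈ F, ball y r}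

/-- The (upper) Assouad dimension of a set `E`. -/
def assouadDim (E : Set X) : ℝ := sInf (assouadDimBddSet E)

/-- The set of admissible exponents in the definition of the lower Assouad codimension. -/
def assouadCodimBddSet (μ : Measure X) (E : Set X) : Set ℝ :=
  {ρ : ℝ | 0 ≤ ρ ∧ ∃ C : ℝ, 1 ≤ C ∧ ∀ x ∈ E, ∀ r R : ℝ, 0 < r → r < R →
    ENNReal.ofReal R < 2 * EMetric.diam (univ : Set X) →
    μ ({y : X | infDist y E < r} ∩ ball x R) ≤
      ENNReal.ofReal (C * (r / R) ^ ρ) * μ (ball x R)}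

/-- The lower Assouad codimension of a set `E` with respect to `μ`. -/
def assouadCodim (μ : Measure X) (E : Set X) : ℝ := sSup (assouadCodimBddSet μ E)

/-- Porosity of a set `E ⊆ X`. -/
def IsPorous (E : Set X) : Prop :=
  ∃ c : ℝ, 0 < c ∧ c < 1 ∧ ∀ x ∈ E, ∀ r : ℝ, 0 < r →
    ENNReal.ofReal r < 2 * EMetric.diam (univ : Set X) →
    ∃ y : X, ball y (c * r) ⊆ ball x r \ E

/-- A weight: measurable, a.e. positive and finite, locally integrable on balls. -/
def IsWeight (μ : Measure X) (w : X → ℝ≥0∞) : Prop :=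
  Measurable w ∧ (∀ᵐ x ∂μ, 0 < w x ∧ w x ≠ ∞) ∧
    ∀ (x : X) (r : ℝ), 0 < r → ∫⁻ y in ball x r, w y ∂μ ≠ ∞

/-- Membership in the Muckenhoupt class `A_p`, `1 < p < ∞`. -/
def MemAp (μ : Measure X) (w : X → ℝ≥0∞) (p : ℝ) : Prop :=
  IsWeight μ w ∧ ∃ A : ℝ, 0 < A ∧ ∀ (x : X) (r : ℝ), 0 < r →
    ((∫⁻ y in ball x r, w y ∂μ) / μ (ball x r)) *
      ((∫⁻ y in ball x r, w y ^ (-(1 / (p - 1))) ∂μ) / μ (ball x r)) ^ (p - 1) ≤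
      ENNReal.ofReal A

/-- Membership in the Muckenhoupt class `A_1`. -/
def MemA1 (μ : Measure X) (w : X → ℝ≥0∞) : Prop :=
  IsWeight μ w ∧ ∃ A : ℝ, 0 < A ∧ ∀ (x : X) (r : ℝ), 0 < r →
    ((∫⁻ y in ball x r, w y ∂μ) / μ (ball x r)) *
      essSup (fun y => (w y)⁻¹) (μ.restrict (ball x r)) ≤ ENNReal.ofReal A

/-- Membership in the Muckenhoupt class `A_∞`. -/
def MemAinfty (μ : Measure X) (w : X → ℝ≥0∞) : Prop :=
  IsWeight μ w ∧ ∃ C d : ℝ, 0 < C ∧ 0 < d ∧ ∀ (x : X) (r : ℝ), 0 < r →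
    ∀ F : Set X, MeasurableSet F → F ⊆ ball x r →
      ∫⁻ y in F, w y ∂μ ≤
        ENNReal.ofReal C * (μ F / μ (ball x r)) ^ d * ∫⁻ y in ball x r, w y ∂μ

/-- The weight `w = δ_E^{-α} = dist(·,E)^{-α}` (with values in `ℝ≥0∞`). -/
def distWeight (E : Set X) (α : ℝ) : X → ℝ≥0∞ :=
  fun x => ENNReal.ofReal (infDist x E) ^ (-α)

/-- The Aikawa condition with exponent `α` and constant `C`. -/
def AikawaCondition (μ : Measure X) (E : Set X) (α C : ℝ) : Prop :=
  ∀ x ∈ E, ∀ r : ℝ, 0 < r → ENNReal.ofReal r < 2 * EMetric.diam (univ : Set X) →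
    ∫⁻ y in ball x r, ENNReal.ofReal (infDist y E) ^ (-α) ∂μ ≤
      ENNReal.ofReal (C * r ^ (-α)) * μ (ball x r)

/-- The Riesz potential `I_s f`. -/
def rieszPotential (μ : Measure X) (s : ℝ) (f : X → ℝ≥0∞) (x : X) : ℝ≥0∞ :=
  ∫⁻ y, f y * ENNReal.ofReal (dist x y ^ s) / μ (ball x (dist x y)) ∂μ

/-- `Lip_0(X)`: Lipschitz functions vanishing outside some ball. -/
def MemLip0 (f : X → ℝ) : Prop :=
  (∃ K : ℝ≥0, LipschitzWith K f) ∧ ∃ (x : X) (r : ℝ), ∀ y : X, y ∉ ball x r → f y = 0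

/-- The `λ`-chain condition. -/
def ChainCondition (X : Type*) [MetricSpace X] (lam : ℝ) : Prop :=
  ∃ M : ℝ, 1 ≤ M ∧ ∀ (x : X) (r R : ℝ), 0 < r → r < R →
    ∃ (k : ℕ) (c : ℕ → X) (ρ : ℕ → ℝ),
      (∀ i ≤ k, 0 < ρ i) ∧
      ball (c 0) (lam * ρ 0) ⊆ (ball x R)ᶜ ∧
      ball (c k) (lam * ρ k) ⊆ ball x r ∧
      (∀ i ≤ k,
        M⁻¹ * Metric.diam (ball (c i) (lam * ρ i)) ≤ infDist x (ball (c i) (lam * ρ i)) ∧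
        infDist x (ball (c i) (lam * ρ i)) ≤ M * Metric.diam (ball (c i) (lam * ρ i))) ∧
      (∀ i < k, ∃ (z : X) (t : ℝ), 0 < t ∧
        ball z t ⊆ ball (c i) (ρ i) ∩ ball (c (i + 1)) (ρ (i + 1)) ∧
        ball (c i) (ρ i) ∪ ball (c (i + 1)) (ρ (i + 1)) ⊆ ball z (M * t)) ∧
      (∀ y : X, (({i : ℕ | i ≤ k ∧ y ∈ ball (c i) (lam * ρ i)}).ncard : ℝ) ≤ M)

/-- The inner integral appearing in fractional Hardy–Sobolev inequalities:
`y ↦ ∫_X |f(y)-f(z)|^t / (d(y,z)^{st} μ(B(y,d(y,z)))) dμ(z)`. -/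
def fracEnergyKernel (μ : Measure X) (s t : ℝ) (f : X → ℝ) (y : X) : ℝ≥0∞ :=
  ∫⁻ z, ENNReal.ofReal (|f y - f z| ^ t) /
    (ENNReal.ofReal (dist y z ^ (s * t)) * μ (ball y (dist y z))) ∂μ


end

/-!
Write `δ = dist(·, E)`, `a = -α > 0` and `β = α / (1 - p) > 0`, so that `w = δ ^ a` and
`w ^ (-1 / (p - 1)) = δ ^ (-β)`, and fix `ρ > β` in the codimension bound. For a ball `B(x, t)`
centred on `E`, the layer `{2 ^ (-k-1) t ≤ δ < 2 ^ (-k) t}` has measure `≲ 2 ^ (-kρ) μ(B)`, and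
`δ ^ (-β) ≲ 2 ^ (kβ) t ^ (-β)` on it; summing the geometric series gives the Aikawa bound
`∫_B δ ^ (-β) ≲ t ^ (-β) μ(B)`. An arbitrary ball `B(x, r)` is either far from `E`
(`2r ≤ δ(x)`), and then `δ ≈ δ(x)` on it, or it lies in a ball `B(x₁, 3r)` centred on `E` and of
comparable measure. Either way there is a scale `s` with `⨍_B w ≲ s ^ a` and
`⨍_B δ ^ (-β) ≲ s ^ (-β)`, so the `A_p` product is `≲ s ^ (a - β (p - 1)) = 1`.
The codimension bound only covers radii below `2 diam X`; a larger ball is all of `X`, hence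
equal to a ball of admissible radius.
-/

open Filter Topology

section

variable {Ω : Type*} [MeasurableSpace Ω] {μ : Measure Ω} {s : Set Ω} {f : Ω → ℝ}

theorem setLIntegral_ofReal_rpow_le_of_le {c M : ℝ} (hc : 0 ≤ c) (hM : 0 ≤ M)
    (h : ∀ y ∈ s, f y ≤ M) :
    ∫⁻ y in s, ENNReal.ofReal (f y) ^ c ∂μ ≤ ENNReal.ofReal (M ^ c) * μ s := by
  rw [← setLIntegral_const, ← ENNReal.ofReal_rpow_of_nonneg hM hc]
  exact setLIntegral_mono measurable_const fun y hy =>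
    ENNReal.rpow_le_rpow (ENNReal.ofReal_le_ofReal (h y hy)) hc

theorem setLIntegral_ofReal_rpow_le_of_ge {c m : ℝ} (hc : c ≤ 0) (hm : 0 < m)
    (h : ∀ y ∈ s, m ≤ f y) :
    ∫⁻ y in s, ENNReal.ofReal (f y) ^ c ∂μ ≤ ENNReal.ofReal (m ^ c) * μ s := by
  rw [← setLIntegral_const]
  refine setLIntegral_mono measurable_const fun y hy => ?_
  rw [ENNReal.ofReal_rpow_of_pos (hm.trans_le (h y hy))]
  exact ENNReal.ofReal_le_ofReal (Real.rpow_le_rpow_of_nonpos hm (h y hy) hc)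

theorem setLIntegral_le_of_subset_iUnion_geometric {z : Set Ω} {g : Ω → ℝ≥0∞} {L : ℕ → Set Ω}
    {c q : ℝ} {m : ℝ≥0∞} (hz : μ z = 0) (hcover : s \ z ⊆ ⋃ k, L k) (hc : 0 ≤ c) (hq0 : 0 ≤ q)
    (hq1 : q < 1) (hL : ∀ k, ∫⁻ y in L k, g y ∂μ ≤ ENNReal.ofReal (c * q ^ k) * m) :
    ∫⁻ y in s, g y ∂μ ≤ ENNReal.ofReal (c * (1 - q)⁻¹) * m := by
  calc ∫⁻ y in s, g y ∂μ = ∫⁻ y in s \ z, g y ∂μ :=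
        setLIntegral_congr (sdiff_null_ae_eq_self hz).symm
    _ ≤ ∫⁻ y in ⋃ k, L k, g y ∂μ := lintegral_mono_set hcover
    _ ≤ ∑' k, ∫⁻ y in L k, g y ∂μ := lintegral_iUnion_le _ _
    _ ≤ ∑' k, ENNReal.ofReal (c * q ^ k) * m := ENNReal.tsum_le_tsum hL
    _ = ENNReal.ofReal (c * (1 - q)⁻¹) * m := by
        rw [ENNReal.tsum_mul_right, ← ENNReal.ofReal_tsum_of_nonneg (fun k => by positivity)
          ((summable_geometric_of_lt_one hq0 hq1).mul_left _), tsum_mul_left,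
          tsum_geometric_of_lt_one hq0 hq1]

end

section

variable {X : Type*} [MetricSpace X]

theorem exists_radius_lt_two_mul_ediam_ball_eq [Nontrivial X] (x : X) {R : ℝ} (hR : 0 < R) :
    ∃ t, 0 < t ∧ t ≤ R ∧ ENNReal.ofReal t < 2 * ediam (univ : Set X) ∧
      ball x t = ball x R := by
  by_cases hR' : ENNReal.ofReal R < 2 * ediam (univ : Set X)
  · exact ⟨R, hR, le_rfl, hR', rfl⟩
  have hbdd : Bornology.IsBounded (univ : Set X) := by
    rw [isBounded_iff_ediam_ne_top]
    rintro h
    simp [h] at hR'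
  have hediam : 2 * ediam (univ : Set X) = ENNReal.ofReal (2 * diam (univ : Set X)) := by
    rw [ENNReal.ofReal_mul zero_le_two, ENNReal.ofReal_ofNat, diam,
      ENNReal.ofReal_toReal hbdd.ediam_ne_top]
  have hD : 0 < diam (univ : Set X) := diam_pos nontrivial_univ hbdd
  have h2D : 2 * diam (univ : Set X) ≤ R := by
    rw [hediam, not_lt, ENNReal.ofReal_le_ofReal_iff hR.le] at hR'
    exact hR'
  have hball : ∀ s, diam (univ : Set X) < s → ball x s = univ := fun s hs =>
    eq_univ_of_forall fun y => mem_ball.2 ((dist_le_diam_of_mem hbdd trivial trivial).trans_lt hs)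
  refine ⟨3 / 2 * diam univ, by positivity, by linarith, ?_, ?_⟩
  · rw [hediam, ENNReal.ofReal_lt_ofReal_iff (by positivity)]
    linarith
  · rw [hball _ (by linarith), hball _ (by linarith)]

variable [MeasurableSpace X] {μ : Measure X} {E : Set X}

theorem DoublingWith.measure_ball_two_pow_mul_le {C : ℝ} (h : DoublingWith μ C)
    (x : X) {r : ℝ} (hr : 0 < r) (n : ℕ) :
    μ (ball x (2 ^ n * r)) ≤ ENNReal.ofReal C ^ n * μ (ball x r) := by
  induction n with
  | zero => simp
  | succ n ih =>
    calc μ (ball x (2 ^ (n + 1) * r)) = μ (ball x (2 * (2 ^ n * r))) := by ring_nf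
      _ ≤ ENNReal.ofReal C * μ (ball x (2 ^ n * r)) := h x _ (by positivity)
      _ ≤ ENNReal.ofReal C * (ENNReal.ofReal C ^ n * μ (ball x r)) := by gcongr
      _ = ENNReal.ofReal C ^ (n + 1) * μ (ball x r) := by ring

theorem exists_measure_infDist_lt_inter_ball_le {ρ : ℝ} (hρ : ρ ∈ assouadCodimBddSet μ E) :
    ∃ C : ℝ, 1 ≤ C ∧ ∀ x ∈ E, ∀ r R : ℝ, 0 < r → r ≤ R →
      ENNReal.ofReal R < 2 * ediam (univ : Set X) →
      μ ({y : X | infDist y E < r} ∩ ball x R) ≤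
        ENNReal.ofReal (C * (r / R) ^ ρ) * μ (ball x R) := by
  obtain ⟨-, C, hC, hcod⟩ := hρ
  refine ⟨C, hC, fun x hx r R hr hrR hR => ?_⟩
  rcases hrR.lt_or_eq with hrR | rfl
  · exact hcod x hx r R hr hrR hR
  calc μ ({y : X | infDist y E < r} ∩ ball x r) ≤ 1 * μ (ball x r) := by
        rw [one_mul]; exact measure_mono inter_subset_right
    _ ≤ ENNReal.ofReal (C * (r / r) ^ ρ) * μ (ball x r) := by
        rw [div_self hr.ne', Real.one_rpow, mul_one]
        gcongr
        exact ENNReal.one_le_ofReal.2 hC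

theorem measure_setOf_infDist_eq_zero [Nontrivial X] (hballs : BallsPosFinite μ)
    (hE : E.Nonempty) {ρ : ℝ} (hρ : ρ ∈ assouadCodimBddSet μ E) (hρ0 : 0 < ρ) :
    μ {y | infDist y E = 0} = 0 := by
  obtain ⟨x₀, hx₀⟩ := hE
  obtain ⟨C, -, hcod⟩ := exists_measure_infDist_lt_inter_ball_le hρ
  suffices h : ∀ n : ℕ, μ ({y | infDist y E = 0} ∩ ball x₀ n) = 0 by
    rw [← inter_univ {y | infDist y E = 0}, ← iUnion_ball_nat x₀, inter_iUnion]
    exact measure_iUnion_null h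
  intro n
  rcases (Nat.cast_nonneg n : (0 : ℝ) ≤ n).eq_or_lt with hn | hn
  · rw [← hn, ball_zero, inter_empty, measure_empty]
  obtain ⟨t, ht, -, htd, hball⟩ := exists_radius_lt_two_mul_ediam_ball_eq x₀ hn
  rw [← hball]
  have hlim : Tendsto (fun r : ℝ => ENNReal.ofReal (C * (r / t) ^ ρ) * μ (ball x₀ t))
      (𝓝[>] 0) (𝓝 0) := by
    have h0 : Tendsto (fun r : ℝ => C * (r / t) ^ ρ) (𝓝 0) (𝓝 0) := by
      have := (((continuous_id.div_const t).rpow_const fun _ => Or.inr hρ0.le).const_mul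
        C).tendsto 0
      simpa [Real.zero_rpow hρ0.ne'] using this
    simpa using (ENNReal.Tendsto.mul_const (ENNReal.tendsto_ofReal h0)
      (Or.inr (hballs x₀ t ht).2.ne)).mono_left nhdsWithin_le_nhds
  refine le_antisymm (ge_of_tendsto hlim ?_) bot_le
  filter_upwards [Ioo_mem_nhdsGT ht] with r hr
  have hsub : {y | infDist y E = 0} ∩ ball x₀ t ⊆ {y | infDist y E < r} ∩ ball x₀ t :=
    inter_subset_inter_left _ fun y (hy : infDist y E = 0) => show infDist y E < r by
      rw [hy]; exact hr.1
  exact (measure_mono hsub).trans (hcod x₀ hx₀ r t hr.1 hr.2.le htd)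

theorem exists_mul_pow_succ_le_lt_mul_pow {q t d : ℝ} (hq0 : 0 < q) (hq1 : q < 1) (hd : 0 < d)
    (hdt : d < t) : ∃ k : ℕ, t * q ^ (k + 1) ≤ d ∧ d < t * q ^ k := by
  classical
  have hex : ∃ k : ℕ, t * q ^ (k + 1) ≤ d := by
    obtain ⟨k, hk⟩ := exists_pow_lt_of_lt_one (div_pos hd (hd.trans hdt)) hq1
    have hlt : t * q ^ k < d := by rwa [lt_div_iff₀ (hd.trans hdt), mul_comm] at hk
    exact ⟨k, le_trans (mul_le_mul_of_nonneg_left (pow_le_pow_of_le_one hq0.le hq1.le k.le_succ)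
      (hd.trans hdt).le) hlt.le⟩
  refine ⟨Nat.find hex, Nat.find_spec hex, ?_⟩
  match h : Nat.find hex with
  | 0 => simpa using hdt
  | j + 1 => exact not_le.1 (Nat.find_min hex (h ▸ j.lt_succ_self))

theorem exists_aikawaCondition {β ρ : ℝ}
    (hρ : ρ ∈ assouadCodimBddSet μ E) (hβ : 0 ≤ β) (hβρ : β < ρ)
    (hZ : μ {y | infDist y E = 0} = 0) : ∃ C, AikawaCondition μ E β C := by
  obtain ⟨C, hC, hcod⟩ := exists_measure_infDist_lt_inter_ball_le hρ
  set q : ℝ := 2⁻¹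
  have hq0 : 0 < q := by norm_num
  have hq1 : q < 1 := by norm_num
  set g : ℝ := q ^ ρ * q ^ (-β)
  have hg0 : 0 ≤ g := by positivity
  have hg1 : g < 1 := by
    show q ^ ρ * q ^ (-β) < 1
    rw [← Real.rpow_add hq0]
    exact Real.rpow_lt_one hq0.le hq1 (by linarith)
  refine ⟨C * q ^ (-β) * (1 - g)⁻¹, fun x hx t ht htd => ?_⟩
  set layer : ℕ → Set X := fun k =>
    {y ∈ ball x t | t * q ^ (k + 1) ≤ infDist y E ∧ infDist y E < t * q ^ k}
  have hcover : ball x t \ {y | infDist y E = 0} ⊆ ⋃ k, layer k := by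
    rintro y ⟨hy, hy0 : infDist y E ≠ 0⟩
    have hlt : infDist y E < t := (infDist_le_dist_of_mem hx).trans_lt (mem_ball.1 hy)
    obtain ⟨k, hk⟩ := exists_mul_pow_succ_le_lt_mul_pow hq0 hq1 (infDist_nonneg.lt_of_ne' hy0) hlt
    exact mem_iUnion.2 ⟨k, show y ∈ layer k from ⟨hy, hk⟩⟩
  have hlayer : ∀ k, ∫⁻ y in layer k, ENNReal.ofReal (infDist y E) ^ (-β) ∂μ ≤
      ENNReal.ofReal (C * q ^ (-β) * t ^ (-β) * g ^ k) * μ (ball x t) := by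
    intro k
    have hsub : layer k ⊆ {y | infDist y E < t * q ^ k} ∩ ball x t := fun y hy => ⟨hy.2.2, hy.1⟩
    have hmeas : μ (layer k) ≤ ENNReal.ofReal (C * (t * q ^ k / t) ^ ρ) * μ (ball x t) :=
      (measure_mono hsub).trans (hcod x hx _ t (by positivity)
        (mul_le_of_le_one_right ht.le (pow_le_one₀ hq0.le hq1.le)) htd)
    calc ∫⁻ y in layer k, ENNReal.ofReal (infDist y E) ^ (-β) ∂μ
        ≤ ENNReal.ofReal ((t * q ^ (k + 1)) ^ (-β)) * μ (layer k) :=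
          setLIntegral_ofReal_rpow_le_of_ge (neg_nonpos.2 hβ) (by positivity) fun y hy => hy.2.1
      _ ≤ ENNReal.ofReal ((t * q ^ (k + 1)) ^ (-β)) *
          (ENNReal.ofReal (C * (t * q ^ k / t) ^ ρ) * μ (ball x t)) := by gcongr
      _ = ENNReal.ofReal (C * q ^ (-β) * t ^ (-β) * g ^ k) * μ (ball x t) := by
          rw [← mul_assoc, ← ENNReal.ofReal_mul (by positivity), mul_div_cancel_left₀ _ ht.ne',
            Real.mul_rpow ht.le (by positivity), ← Real.rpow_pow_comm hq0.le,
            ← Real.rpow_pow_comm hq0.le, mul_pow]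
          ring_nf
  refine (setLIntegral_le_of_subset_iUnion_geometric hZ hcover (by positivity) hg0 hg1
    hlayer).trans_eq ?_
  rw [mul_right_comm (C * q ^ (-β))]

theorem setLIntegral_infDist_rpow_le_of_two_mul_le {x : X}
    {r a b : ℝ} (hr : 0 < r) (hfar : 2 * r ≤ infDist x E) (ha : 0 ≤ a) (hb : 0 ≤ b) :
    ∫⁻ y in ball x r, ENNReal.ofReal (infDist y E) ^ a ∂μ ≤
        ENNReal.ofReal ((3 / 2) ^ a * infDist x E ^ a) * μ (ball x r) ∧
      ∫⁻ y in ball x r, ENNReal.ofReal (infDist y E) ^ (-b) ∂μ ≤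
        ENNReal.ofReal (2 ^ b * infDist x E ^ (-b)) * μ (ball x r) := by
  have hδ : 0 ≤ infDist x E := infDist_nonneg
  constructor
  · rw [← Real.mul_rpow (by norm_num) hδ]
    refine setLIntegral_ofReal_rpow_le_of_le ha (by positivity) fun y hy => ?_
    linarith [infDist_le_infDist_add_dist (x := y) (y := x) (s := E), mem_ball.1 hy]
  · rw [← inv_inv (2 : ℝ), Real.inv_rpow (by norm_num), ← Real.rpow_neg (by norm_num),
      ← Real.mul_rpow (by norm_num) hδ]
    refine setLIntegral_ofReal_rpow_le_of_ge (neg_nonpos.2 hb) (by linarith) fun y hy => ?_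
    linarith [infDist_le_infDist_add_dist (x := x) (y := y) (s := E), mem_ball'.1 hy]

theorem exists_setLIntegral_infDist_rpow_le_of_dist_lt [Nontrivial X] {CD β C : ℝ}
    (hdbl : DoublingWith μ CD) (hCD : 0 ≤ CD) (hAik : AikawaCondition μ E β C)
    {x x₁ : X} (hx₁ : x₁ ∈ E) {r a : ℝ} (hr : 0 < r) (hxx₁ : dist x x₁ < 2 * r) (ha : 0 ≤ a) :
    ∃ t, 0 < t ∧
      ∫⁻ y in ball x r, ENNReal.ofReal (infDist y E) ^ a ∂μ ≤
        ENNReal.ofReal (t ^ a) * μ (ball x r) ∧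
      ∫⁻ y in ball x r, ENNReal.ofReal (infDist y E) ^ (-β) ∂μ ≤
        ENNReal.ofReal (C * CD ^ 3 * t ^ (-β)) * μ (ball x r) := by
  obtain ⟨t, ht, -, htd, hball⟩ :=
    exists_radius_lt_two_mul_ediam_ball_eq x₁ (R := 3 * r) (by positivity)
  have hsub : ball x r ⊆ ball x₁ t := hball ▸ ball_subset_ball' (by linarith)
  have hsub' : ball x₁ t ⊆ ball x (2 ^ 3 * r) :=
    hball ▸ ball_subset_ball' (by linarith [dist_comm x x₁])
  refine ⟨t, ht, setLIntegral_ofReal_rpow_le_of_le ha ht.le fun y hy =>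
    (infDist_le_dist_of_mem hx₁).trans (mem_ball.1 (hsub hy)).le, ?_⟩
  calc ∫⁻ y in ball x r, ENNReal.ofReal (infDist y E) ^ (-β) ∂μ
      ≤ ∫⁻ y in ball x₁ t, ENNReal.ofReal (infDist y E) ^ (-β) ∂μ := lintegral_mono_set hsub
    _ ≤ ENNReal.ofReal (C * t ^ (-β)) * μ (ball x₁ t) := hAik x₁ hx₁ t ht htd
    _ ≤ ENNReal.ofReal (C * t ^ (-β)) * (ENNReal.ofReal CD ^ 3 * μ (ball x r)) := by
        gcongr
        exact (measure_mono hsub').trans (hdbl.measure_ball_two_pow_mul_le x hr 3)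
    _ = ENNReal.ofReal (C * CD ^ 3 * t ^ (-β)) * μ (ball x r) := by
        rw [← mul_assoc, ← ENNReal.ofReal_pow hCD, ← ENNReal.ofReal_mul' (by positivity)]
        ring_nf

theorem exists_scale_setLIntegral_infDist_rpow_le [Nontrivial X] (hE : E.Nonempty) {CD β C a : ℝ}
    (hdbl : DoublingWith μ CD) (hCD : 0 ≤ CD)
    (hAik : AikawaCondition μ E β C) (ha : 0 ≤ a) (hβ : 0 ≤ β) (x : X) {r : ℝ} (hr : 0 < r) :
    ∃ s, 0 < s ∧
      ∫⁻ y in ball x r, ENNReal.ofReal (infDist y E) ^ a ∂μ ≤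
        ENNReal.ofReal ((3 / 2) ^ a * s ^ a) * μ (ball x r) ∧
      ∫⁻ y in ball x r, ENNReal.ofReal (infDist y E) ^ (-β) ∂μ ≤
        ENNReal.ofReal (max (2 ^ β) (C * CD ^ 3) * s ^ (-β)) * μ (ball x r) := by
  by_cases hfar : 2 * r ≤ infDist x E
  · obtain ⟨h₁, h₂⟩ := setLIntegral_infDist_rpow_le_of_two_mul_le (μ := μ) hr hfar ha hβ
    refine ⟨infDist x E, by linarith, h₁, h₂.trans ?_⟩
    gcongr ENNReal.ofReal (?_ * _) * _
    · exact Real.rpow_nonneg infDist_nonneg _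
    · exact le_max_left _ _
  · obtain ⟨x₁, hx₁, hxx₁⟩ := (infDist_lt_iff hE).1 (not_le.1 hfar)
    obtain ⟨t, ht, h₁, h₂⟩ :=
      exists_setLIntegral_infDist_rpow_le_of_dist_lt hdbl hCD hAik hx₁ hr hxx₁ ha
    refine ⟨t, ht, h₁.trans ?_, h₂.trans ?_⟩
    · gcongr
      exact le_mul_of_one_le_left (by positivity) (Real.one_le_rpow (by norm_num) ha)
    · gcongr ENNReal.ofReal (?_ * _) * _
      exact le_max_right _ _

theorem exists_mem_assouadCodimBddSet_gt {c : ℝ} (hc : 0 ≤ c)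
    (h : c < assouadCodim μ E) : ∃ ρ ∈ assouadCodimBddSet μ E, c < ρ := by
  refine exists_lt_of_lt_csSup (nonempty_iff_ne_empty.2 fun hS => ?_) h
  rw [assouadCodim, hS, Real.sSup_empty] at h
  linarith

theorem memAp_rpow_of_forall_ball (hballs : BallsPosFinite μ) {g : X → ℝ≥0∞}
    (hg : Measurable g) (hg0 : ∀ᵐ y ∂μ, g y ≠ 0) (hgtop : ∀ y, g y ≠ ∞) {a p K₁ K₂ : ℝ}
    (ha : 0 < a) (hp : 1 < p) (hK₁ : 0 < K₁) (hK₂ : 0 < K₂)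
    (h : ∀ (x : X) (r : ℝ), 0 < r → ∃ s, 0 < s ∧
      ∫⁻ y in ball x r, g y ^ a ∂μ ≤ ENNReal.ofReal (K₁ * s ^ a) * μ (ball x r) ∧
      ∫⁻ y in ball x r, g y ^ (-(a / (p - 1))) ∂μ ≤
        ENNReal.ofReal (K₂ * s ^ (-(a / (p - 1)))) * μ (ball x r)) :
    MemAp μ (fun y => g y ^ a) p := by
  have hp1 : 0 < p - 1 := by linarith
  have hdual : ∀ y, (g y ^ a) ^ (-(1 / (p - 1))) = g y ^ (-(a / (p - 1))) := fun y => by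
    rw [← ENNReal.rpow_mul]
    ring_nf
  refine ⟨⟨hg.pow_const a, ?_, fun x r hr => ?_⟩, K₁ * K₂ ^ (p - 1), by positivity,
    fun x r hr => ?_⟩
  · filter_upwards [hg0] with y hy
    exact ⟨ENNReal.rpow_pos (pos_iff_ne_zero.2 hy) (hgtop y),
      ENNReal.rpow_ne_top_of_nonneg ha.le (hgtop y)⟩
  · obtain ⟨s, -, h₁, -⟩ := h x r hr
    exact ne_top_of_le_ne_top (ENNReal.mul_ne_top ENNReal.ofReal_ne_top (hballs x r hr).2.ne) h₁
  · obtain ⟨s, hs, h₁, h₂⟩ := h x r hr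
    simp only [hdual]
    calc (∫⁻ y in ball x r, g y ^ a ∂μ) / μ (ball x r) *
          ((∫⁻ y in ball x r, g y ^ (-(a / (p - 1))) ∂μ) / μ (ball x r)) ^ (p - 1)
        ≤ ENNReal.ofReal (K₁ * s ^ a) * ENNReal.ofReal (K₂ * s ^ (-(a / (p - 1)))) ^ (p - 1) := by
          gcongr
          exacts [ENNReal.div_le_of_le_mul h₁, ENNReal.div_le_of_le_mul h₂]
      _ = ENNReal.ofReal (K₁ * K₂ ^ (p - 1)) := by
          rw [ENNReal.ofReal_rpow_of_nonneg (by positivity) hp1.le,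
            ← ENNReal.ofReal_mul (by positivity), Real.mul_rpow hK₂.le (by positivity),
            ← Real.rpow_mul hs.le, neg_mul, div_mul_cancel₀ _ hp1.ne', Real.rpow_neg hs.le]
          congr 1
          field_simp

end

variable {X : Type*} [MetricSpace X] [MeasurableSpace X] [BorelSpace X]

theorem distWeight_memAp_of_neg_general [Nontrivial X]
    (μ : Measure X) (hballs : BallsPosFinite μ) (hdbl : Doubling μ)
    (E : Set X) (hE : E.Nonempty)
    (α p : ℝ) (hα : α < 0) (hp : 1 < p)
    (hcodim : α / (1 - p) < assouadCodim μ E) :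
    MemAp μ (distWeight E α) p := by
  obtain ⟨CD, hCD, hdb⟩ := hdbl
  set β := -α / (p - 1) with hβ_def
  have hβ : 0 < β := div_pos (neg_pos.2 hα) (by linarith)
  have hβα : α / (1 - p) = β := by rw [hβ_def, ← neg_div_neg_eq, neg_sub]
  obtain ⟨ρ, hρ, hβρ⟩ := exists_mem_assouadCodimBddSet_gt hβ.le (hβα ▸ hcodim)
  have hZ := measure_setOf_infDist_eq_zero hballs hE hρ (hβ.trans hβρ)
  obtain ⟨C, hAik⟩ := exists_aikawaCondition hρ hβ.le hβρ hZ
  have hδ0 : ∀ᵐ y ∂μ, ENNReal.ofReal (infDist y E) ≠ 0 := by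
    filter_upwards [measure_eq_zero_iff_ae_notMem.1 hZ] with y hy
    exact (ENNReal.ofReal_pos.2 (infDist_nonneg.lt_of_ne' hy)).ne'
  exact memAp_rpow_of_forall_ball hballs (continuous_infDist_pt E).measurable.ennreal_ofReal hδ0
    (fun _ => ENNReal.ofReal_ne_top) (neg_pos.2 hα) hp (by positivity)
    (lt_max_of_lt_left (by positivity))
    fun x r hr => exists_scale_setLIntegral_infDist_rpow_le hE hdb hCD.le hAik
      (neg_nonneg.2 hα.le) hβ.le x hr

theorem distWeight_memAp_of_neg [Nontrivial X]
    (μ : Measure X) (hballs : BallsPosFinite μ) (hdbl : Doubling μ)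
    (E : Set X) (hE : E.Nonempty) (hEc : IsClosed E)
    (α p : ℝ) (hα : α < 0) (hp : 1 < p)
    (hcodim : α / (1 - p) < assouadCodim μ E) :
    MemAp μ (distWeight E α) p :=
  distWeight_memAp_of_neg_general μ hballs hdbl E hE α p hα hp hcodim

end ApDistance
end

section
/- Let ∅ ≠ E ⊂ X be a closed set. Then the lower Assouad codimension codim_A(E) equals the supremum of all exponents α ≥ 0 for which E satisfies the Aikawa condition with exponent α and some constant C ≥ 1. In particular, E satisfies the Aikawa condition for every exponent 0 ≤ α < codim_A(E). -/
open MeasureTheory Metric Set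
open scoped ENNReal NNReal

namespace ApDistance

noncomputable section

variable {X : Type*} [MetricSpace X] [MeasurableSpace X] [BorelSpace X]

/-!
If `∫_{B(x,r)} δ_E^{-α} ≤ C r^{-α} μ(B(x,r))`, Chebyshev's inequality on `{δ_E < t}` gives
`μ(E_t ∩ B(x,r)) ≤ C (t/r)^α μ(B(x,r))`, so every Aikawa exponent is an Assouad codimension
exponent. Conversely, if `μ(E_t ∩ B(x,r)) ≤ C (t/r)^ρ μ(B(x,r))` and `α < ρ`, split `B(x,r)` into
the dyadic shells `{r 2^{-n-1} ≤ δ_E < r 2^{-n}}`: on the `n`-th shell `δ_E^{-α} ≤ 2^α r^{-α} 2^{nα}`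
while its measure is at most `C 2^{-nρ} μ(B(x,r))`, and the geometric series with ratio
`2^{α-ρ} < 1` converges; the set `{δ_E = 0}` is null since it lies in every `E_t`. Hence every
`α < ρ` is an Aikawa exponent, and the two sets of exponents have the same supremum.
-/

open Filter Topology

lemma ENNReal.rpow_neg_le_rpow_neg {a b : ℝ≥0∞} (hab : a ≤ b) {p : ℝ} (hp : 0 ≤ p) :
    b ^ (-p) ≤ a ^ (-p) := by
  rw [ENNReal.rpow_neg, ENNReal.rpow_neg]
  exact ENNReal.inv_le_inv.2 (ENNReal.rpow_le_rpow hab hp)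

lemma exists_div_two_pow_le_lt {d r : ℝ} (hd : 0 < d) (hdr : d < r) :
    ∃ n : ℕ, r / 2 ^ (n + 1) ≤ d ∧ d < r / 2 ^ n := by
  by_contra! h
  have hall : ∀ n : ℕ, d < r / 2 ^ n := by
    intro n
    induction n with
    | zero => simpa using hdr
    | succ n ih => exact lt_of_not_ge fun hle => (h n hle).not_gt ih
  obtain ⟨n, hn⟩ := exists_pow_lt_of_lt_one (div_pos hd (hd.trans hdr)) one_half_lt_one
  have hdn := hall n
  rw [lt_div_iff₀ (by positivity)] at hdn
  rw [one_div, inv_pow, inv_lt_iff_one_lt_mul₀ (by positivity), div_mul_eq_mul_div,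
    one_lt_div (hd.trans hdr)] at hn
  linarith

lemma div_two_pow_succ_rpow_neg_mul {r : ℝ} (hr : 0 < r) (α ρ C : ℝ) (n : ℕ) :
    (r / 2 ^ (n + 1)) ^ (-α) * (C * (r / 2 ^ n / r) ^ ρ) =
      C * 2 ^ α * r ^ (-α) * ((2 : ℝ) ^ (α - ρ)) ^ n := by
  have hpow : ((2 : ℝ) ^ (n + 1)) ^ α * (((2 : ℝ) ^ n) ^ ρ)⁻¹ =
      2 ^ α * ((2 : ℝ) ^ (α - ρ)) ^ n := by
    rw [← Real.rpow_neg (by positivity), ← Real.rpow_natCast, ← Real.rpow_natCast,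
      ← Real.rpow_natCast, ← Real.rpow_mul zero_le_two, ← Real.rpow_mul zero_le_two,
      ← Real.rpow_mul zero_le_two, ← Real.rpow_add two_pos, ← Real.rpow_add two_pos]
    push_cast
    ring_nf
  rw [div_div_cancel_left' hr.ne', Real.div_rpow hr.le (by positivity), Real.rpow_neg hr.le,
    Real.rpow_neg (by positivity : (0 : ℝ) ≤ 2 ^ (n + 1)), Real.inv_rpow (by positivity),
    div_inv_eq_mul]
  linear_combination C * (r ^ α)⁻¹ * hpow

section LayerCake

variable {Ω : Type*} [MeasurableSpace Ω] {μ : Measure Ω} {d : Ω → ℝ} {s : Set Ω}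

lemma measure_lt_inter_le_rpow_mul_setLIntegral (hd : Measurable d) {t α : ℝ} (ht : 0 < t)
    (hα : 0 ≤ α) :
    μ ({y | d y < t} ∩ s) ≤
      ENNReal.ofReal (t ^ α) * ∫⁻ y in s, ENNReal.ofReal (d y) ^ (-α) ∂μ := by
  have hmarkov : ENNReal.ofReal t ^ (-α) * μ ({y | d y < t} ∩ s) ≤
      ∫⁻ y in s, ENNReal.ofReal (d y) ^ (-α) ∂μ :=
    calc ENNReal.ofReal t ^ (-α) * μ ({y | d y < t} ∩ s)
        = ∫⁻ _ in {y | d y < t} ∩ s, ENNReal.ofReal t ^ (-α) ∂μ := (setLIntegral_const _ _).symm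
      _ ≤ ∫⁻ y in {y | d y < t} ∩ s, ENNReal.ofReal (d y) ^ (-α) ∂μ :=
          setLIntegral_mono ((ENNReal.measurable_ofReal.comp hd).pow_const _) fun y hy =>
            ENNReal.rpow_neg_le_rpow_neg (ENNReal.ofReal_le_ofReal hy.1.le) hα
      _ ≤ ∫⁻ y in s, ENNReal.ofReal (d y) ^ (-α) ∂μ := lintegral_mono_set inter_subset_right
  have hcancel : ENNReal.ofReal (t ^ α) * ENNReal.ofReal t ^ (-α) = 1 := by
    rw [← ENNReal.ofReal_rpow_of_pos ht, ← ENNReal.rpow_add _ _ (by simpa using ht)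
      ENNReal.ofReal_ne_top, add_neg_cancel, ENNReal.rpow_zero]
  calc μ ({y | d y < t} ∩ s)
      = ENNReal.ofReal (t ^ α) * (ENNReal.ofReal t ^ (-α) * μ ({y | d y < t} ∩ s)) := by
        rw [← mul_assoc, hcancel, one_mul]
    _ ≤ _ := mul_le_mul_right hmarkov _

variable {r ρ C : ℝ}

lemma measure_nonpos_inter_eq_zero (hr : 0 < r) (hρ : 0 < ρ) (hs : μ s ≠ ∞)
    (hμ : ∀ t, 0 < t → t ≤ r →
      μ ({y | d y < t} ∩ s) ≤ ENNReal.ofReal (C * (t / r) ^ ρ) * μ s) :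
    μ ({y | d y ≤ 0} ∩ s) = 0 := by
  have hbound : Tendsto (fun t : ℝ => C * (t / r) ^ ρ) (𝓝[>] 0) (𝓝 0) := by
    have hcont : Continuous fun t : ℝ => C * (t / r) ^ ρ :=
      continuous_const.mul ((continuous_id.div_const r).rpow_const fun _ => Or.inr hρ.le)
    exact (hcont.tendsto' 0 0 (by simp [Real.zero_rpow hρ.ne'])).mono_left nhdsWithin_le_nhds
  have hlim : Tendsto (fun t : ℝ => ENNReal.ofReal (C * (t / r) ^ ρ) * μ s) (𝓝[>] 0) (𝓝 0) := by
    simpa using ENNReal.Tendsto.mul_const (ENNReal.tendsto_ofReal hbound) (Or.inr hs)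
  refine le_antisymm (ge_of_tendsto hlim ?_) zero_le
  filter_upwards [Ioc_mem_nhdsGT hr] with t ht
  refine (measure_mono fun y hy => ?_).trans (hμ t ht.1 ht.2)
  exact ⟨lt_of_le_of_lt hy.1 ht.1, hy.2⟩

lemma setLIntegral_rpow_neg_le {α : ℝ} (hr : 0 < r) (hα : 0 ≤ α) (hαρ : α < ρ) (hC : 0 ≤ C)
    (hs : μ s ≠ ∞) (hds : ∀ y ∈ s, d y < r)
    (hμ : ∀ t, 0 < t → t ≤ r →
      μ ({y | d y < t} ∩ s) ≤ ENNReal.ofReal (C * (t / r) ^ ρ) * μ s) :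
    ∫⁻ y in s, ENNReal.ofReal (d y) ^ (-α) ∂μ ≤
      ENNReal.ofReal (C * 2 ^ α / (1 - 2 ^ (α - ρ)) * r ^ (-α)) * μ s := by
  set κ : ℝ := 2 ^ (α - ρ)
  have hκ0 : 0 ≤ κ := by positivity
  have hκ1 : κ < 1 := Real.rpow_lt_one_of_one_lt_of_neg one_lt_two (by linarith)
  set shell : ℕ → Set Ω := fun n => {y | r / 2 ^ (n + 1) ≤ d y} ∩ ({y | d y < r / 2 ^ n} ∩ s)
  have hnull : μ ({y | d y ≤ 0} ∩ s) = 0 :=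
    measure_nonpos_inter_eq_zero hr (hα.trans_lt hαρ) hs hμ
  have hcover : s ⊆ ({y | d y ≤ 0} ∩ s) ∪ ⋃ n, shell n := by
    intro y hy
    rcases le_or_gt (d y) 0 with hy0 | hy0
    · exact Or.inl ⟨hy0, hy⟩
    · obtain ⟨n, hlow, hhigh⟩ := exists_div_two_pow_le_lt hy0 (hds y hy)
      exact Or.inr (mem_iUnion.2 ⟨n, hlow, hhigh, hy⟩)
  have hshell : ∀ n, ∫⁻ y in shell n, ENNReal.ofReal (d y) ^ (-α) ∂μ ≤
      ENNReal.ofReal (C * 2 ^ α * r ^ (-α) * κ ^ n) * μ s := fun n =>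
    calc ∫⁻ y in shell n, ENNReal.ofReal (d y) ^ (-α) ∂μ
        ≤ ∫⁻ _ in shell n, ENNReal.ofReal (r / 2 ^ (n + 1)) ^ (-α) ∂μ :=
          setLIntegral_mono measurable_const fun y hy =>
            ENNReal.rpow_neg_le_rpow_neg (ENNReal.ofReal_le_ofReal hy.1) hα
      _ = ENNReal.ofReal ((r / 2 ^ (n + 1)) ^ (-α)) * μ (shell n) := by
          rw [setLIntegral_const, ENNReal.ofReal_rpow_of_pos (by positivity)]
      _ ≤ ENNReal.ofReal ((r / 2 ^ (n + 1)) ^ (-α)) *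
            (ENNReal.ofReal (C * (r / 2 ^ n / r) ^ ρ) * μ s) := by
          gcongr
          exact (measure_mono inter_subset_right).trans
            (hμ _ (by positivity) (div_le_self hr.le (one_le_pow₀ one_le_two)))
      _ = ENNReal.ofReal (C * 2 ^ α * r ^ (-α) * κ ^ n) * μ s := by
          rw [← mul_assoc, ← ENNReal.ofReal_mul (by positivity),
            div_two_pow_succ_rpow_neg_mul hr]
  calc ∫⁻ y in s, ENNReal.ofReal (d y) ^ (-α) ∂μ
      ≤ ∫⁻ y in ({y | d y ≤ 0} ∩ s) ∪ ⋃ n, shell n, ENNReal.ofReal (d y) ^ (-α) ∂μ :=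
        lintegral_mono_set hcover
    _ ≤ ∫⁻ y in ⋃ n, shell n, ENNReal.ofReal (d y) ^ (-α) ∂μ := by
        refine (lintegral_union_le _ _ _).trans_eq ?_
        rw [setLIntegral_measure_zero _ _ hnull, zero_add]
    _ ≤ ∑' n, ∫⁻ y in shell n, ENNReal.ofReal (d y) ^ (-α) ∂μ := lintegral_iUnion_le _ _
    _ ≤ ∑' n, ENNReal.ofReal (C * 2 ^ α * r ^ (-α) * κ ^ n) * μ s := ENNReal.tsum_le_tsum hshell
    _ = ENNReal.ofReal (C * 2 ^ α / (1 - κ) * r ^ (-α)) * μ s := by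
        rw [ENNReal.tsum_mul_right, ← ENNReal.ofReal_tsum_of_nonneg (fun n => by positivity)
          ((summable_geometric_of_lt_one hκ0 hκ1).mul_left _), tsum_mul_left,
          tsum_geometric_of_lt_one hκ0 hκ1]
        ring_nf

end LayerCake

section Aikawa

variable {Y : Type*} [MetricSpace Y] [MeasurableSpace Y] {μ : Measure Y} {E : Set Y}

lemma aikawaCondition_zero : AikawaCondition μ E 0 1 := fun x _ r _ _ => by
  simp

lemma mem_assouadCodimBddSet_of_aikawaCondition [BorelSpace Y] {α C : ℝ} (hα : 0 ≤ α) (hC : 1 ≤ C)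
    (h : AikawaCondition μ E α C) : α ∈ assouadCodimBddSet μ E := by
  refine ⟨hα, C, hC, fun x hx r R hr hrR hRdiam => ?_⟩
  have hR := hr.trans hrR
  calc μ ({y | infDist y E < r} ∩ ball x R)
      ≤ ENNReal.ofReal (r ^ α) * ∫⁻ y in ball x R, ENNReal.ofReal (infDist y E) ^ (-α) ∂μ :=
        measure_lt_inter_le_rpow_mul_setLIntegral (continuous_infDist_pt E).measurable hr hα
    _ ≤ ENNReal.ofReal (r ^ α) * (ENNReal.ofReal (C * R ^ (-α)) * μ (ball x R)) := by
        gcongr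
        exact h x hx R hR hRdiam
    _ = ENNReal.ofReal (C * (r / R) ^ α) * μ (ball x R) := by
        rw [← mul_assoc, ← ENNReal.ofReal_mul (by positivity), Real.div_rpow hr.le hR.le,
          Real.rpow_neg hR.le, div_eq_mul_inv]
        ring_nf

lemma exists_aikawaCondition_of_lt {α ρ : ℝ} (hρ : ρ ∈ assouadCodimBddSet μ E) (hα : 0 ≤ α)
    (hαρ : α < ρ) : ∃ C : ℝ, 1 ≤ C ∧ AikawaCondition μ E α C := by
  obtain ⟨-, C₀, hC₀, hcodim⟩ := hρ
  refine ⟨max 1 (C₀ * 2 ^ α / (1 - 2 ^ (α - ρ))), le_max_left _ _, ?_⟩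
  intro x hx r hr hrdiam
  rcases eq_top_or_lt_top (μ (ball x r)) with hB | hB
  · rw [hB, ENNReal.mul_top (by positivity)]
    exact le_top
  have hμ : ∀ t, 0 < t → t ≤ r → μ ({y | infDist y E < t} ∩ ball x r) ≤
      ENNReal.ofReal (C₀ * (t / r) ^ ρ) * μ (ball x r) := by
    intro t ht htr
    rcases htr.lt_or_eq with htr | rfl
    · exact hcodim x hx t r ht htr hrdiam
    · rw [div_self hr.ne', Real.one_rpow, mul_one]
      exact (measure_mono inter_subset_right).trans
        (le_mul_of_one_le_left' (ENNReal.one_le_ofReal.2 hC₀))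
  refine (setLIntegral_rpow_neg_le hr hα hαρ (by linarith) hB.ne
    (fun y hy => (infDist_le_dist_of_mem hx).trans_lt (mem_ball.1 hy)) hμ).trans ?_
  gcongr
  exact le_max_right _ _

end Aikawa

lemma sSup_eq_sSup_of_subset_of_lt_mem {A S : Set ℝ} (hAS : A ⊆ S) (h0 : 0 ∈ A)
    (hSA : ∀ α, 0 ≤ α → ∀ ρ ∈ S, α < ρ → α ∈ A) : sSup A = sSup S := by
  by_cases hS : BddAbove S
  · have hA : BddAbove A := hS.mono hAS
    refine le_antisymm (csSup_le_csSup hS ⟨0, h0⟩ hAS) (le_of_forall_lt fun c hc => ?_)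
    obtain ⟨ρ, hρ, hcρ⟩ := exists_lt_of_lt_csSup ⟨0, hAS h0⟩ hc
    rcases lt_or_ge c 0 with hc0 | hc0
    · exact hc0.trans_le (le_csSup hA h0)
    · exact (by linarith : c < (c + ρ) / 2).trans_le
        (le_csSup hA (hSA _ (by linarith) ρ hρ (by linarith)))
  · have hA : ¬BddAbove A := by
      rintro ⟨b, hb⟩
      obtain ⟨ρ, hρ, hbρ⟩ := not_bddAbove_iff.1 hS (max b 0 + 1)
      have := hb (hSA (max b 0 + 1) (by positivity) ρ hρ hbρ)
      linarith [le_max_left b 0]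
    rw [Real.sSup_of_not_bddAbove hS, Real.sSup_of_not_bddAbove hA]

theorem codim_eq_sSup_aikawa_general
    (μ : Measure X)
    (E : Set X) :
    assouadCodim μ E =
      sSup {α : ℝ | 0 ≤ α ∧ ∃ C : ℝ, 1 ≤ C ∧ AikawaCondition μ E α C} ∧
    ∀ α : ℝ, 0 ≤ α → α < assouadCodim μ E → ∃ C : ℝ, 1 ≤ C ∧ AikawaCondition μ E α C := by
  set A := {α : ℝ | 0 ≤ α ∧ ∃ C : ℝ, 1 ≤ C ∧ AikawaCondition μ E α C}
  have hsub : A ⊆ assouadCodimBddSet μ E := fun α ⟨hα, C, hC, h⟩ =>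
    mem_assouadCodimBddSet_of_aikawaCondition hα hC h
  have hzero : (0 : ℝ) ∈ A := ⟨le_rfl, 1, le_rfl, aikawaCondition_zero⟩
  refine ⟨(sSup_eq_sSup_of_subset_of_lt_mem hsub hzero fun α hα ρ hρ hαρ =>
    ⟨hα, exists_aikawaCondition_of_lt hρ hα hαρ⟩).symm, fun α hα hlt => ?_⟩
  obtain ⟨ρ, hρ, hαρ⟩ := exists_lt_of_lt_csSup ⟨0, hsub hzero⟩ hlt
  exact exists_aikawaCondition_of_lt hρ hα hαρ

theorem codim_eq_sSup_aikawa [Nontrivial X]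
    (μ : Measure X) (hballs : BallsPosFinite μ) (hdbl : Doubling μ)
    (E : Set X) (hE : E.Nonempty) (hEc : IsClosed E) :
    assouadCodim μ E =
      sSup {α : ℝ | 0 ≤ α ∧ ∃ C : ℝ, 1 ≤ C ∧ AikawaCondition μ E α C} ∧
    ∀ α : ℝ, 0 ≤ α → α < assouadCodim μ E → ∃ C : ℝ, 1 ≤ C ∧ AikawaCondition μ E α C :=
  codim_eq_sSup_aikawa_general μ E

end
end ApDistance
end
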